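/- There exists an absolute constant K such that for every n and every pair (B_1, B_2) of binary trees with n leaves, (1/n!)·Σ_{s=0}^{⌊n/2⌋} z_{μ(s)} |A(B_1)_{μ(s)}| |A(B_2)_{μ(s)}| ≤ K, where μ(s) = 2^s 1^{n−2s} and z_{μ(s)} = 2^s s! (n−2s)!. -/

import Mathlib

open scoped Classical

inductive PTree : Type
  | leaf : PTree
  | node : PTree → PTree → PTree
deriving DecidableEq

namespace PTree

def size : PTree → ℕ
  | leaf => 1
  | node l r => size l + size r

def cherries : PTree → ℕ
  | leaf => 0
  | node leaf leaf => 1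
  | node l r => cherries l + cherries r

def height : PTree → ℕ
  | leaf => 0
  | node l r => max (height l) (height r) + 1

def encode : PTree → ℕ
  | leaf => 0
  | node l r => Nat.pair (encode l) (encode r) + 1

def normalize : PTree → PTree
  | leaf => leaf
  | node l r =>
      let l' := normalize l
      let r' := normalize r
      if encode l' ≤ encode r' then node l' r' else node r' l'

def isoFuns : PTree → PTree → List (ℕ → ℕ)
  | leaf, leaf => [fun i => i]
  | node l r, node l' r' =>
      ((isoFuns l l').flatMap fun g => (isoFuns r r').map fun h =>
        fun i => if i < l.size then g i else h (i - l.size) + l'.size)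
      ++
      ((isoFuns l r').flatMap fun g => (isoFuns r l').map fun h =>
        fun i => if i < l.size then g i + l'.size else h (i - l.size))
  | _, _ => []

def planeTrees : ℕ → Finset PTree
  | 0 => ∅
  | 1 => {leaf}
  | n + 2 =>
      (Finset.range (n + 1)).attach.biUnion fun k =>
        ((planeTrees (k.1 + 1)) ×ˢ (planeTrees (n + 1 - k.1))).image
          fun p => node p.1 p.2
  termination_by n => n
  decreasing_by
  · have := Finset.mem_range.mp k.2; omega
  · omega

def binTrees (n : ℕ) : Finset PTree := (planeTrees n).image normalize

/-- Triples (T, v, S): left plane tree, right plane tree, and a matching `v`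
(a permutation of `0, …, n-1`, encoded as the list of its values) matching
leaf `i` of `T` with leaf `v i` of `S`. -/
def Triples (n : ℕ) : Finset (PTree × PTree × List ℕ) :=
  (planeTrees n) ×ˢ ((planeTrees n) ×ˢ (List.range n).permutations.toFinset)

/-- Two triples represent the same tanglegram iff there are isomorphisms of the left
trees and of the right trees compatible with the matchings. -/
def equivTriple (n : ℕ) (t t' : PTree × PTree × List ℕ) : Bool :=
  (isoFuns t.1 t'.1).any fun φ => (isoFuns t.2.1 t'.2.1).any fun ψ =>
    (List.range n).all fun i => t'.2.2.getD (φ i) 0 == ψ (t.2.2.getD i 0)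

/-- The tanglegrams of size `n`: equivalence classes of triples. -/
def tangleClasses (n : ℕ) : Finset (Finset (PTree × PTree × List ℕ)) :=
  (Triples n).image fun t => (Triples n).filter (fun t' => equivTriple n t t' = true)

/-- The number of tanglegrams of size `n`. -/
def numTanglegrams (n : ℕ) : ℕ := (tangleClasses n).card

/-- The probability that a uniformly random tanglegram of size `n` satisfies the
(isomorphism-invariant) property `P` of triples. -/
noncomputable def tangleProb (n : ℕ) (P : PTree × PTree × List ℕ → Prop) : ℝ :=
  ((tangleClasses n).filter fun c => ∃ t ∈ c, P t).card / numTanglegrams n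

/-- The expectation of the statistic `f` of a uniformly random tanglegram of size `n`. -/
noncomputable def tangleExp (n : ℕ) (f : PTree × PTree × List ℕ → ℕ) : ℝ :=
  ∑' k : ℕ, (k : ℝ) * tangleProb n (fun t => f t = k)

end PTree

namespace PTree

/-- The distribution on pairs of binary trees (canonical representatives) induced by
the two halves of a uniformly random tanglegram of size `n`:
probability that the pair of isomorphism classes of the two trees lies in `S`. -/
noncomputable def nuT (n : ℕ) (S : Finset (PTree × PTree)) : ℝ :=
  tangleProb n fun t => (normalize t.1, normalize t.2.1) ∈ S

/-- The distribution on pairs of binary trees induced by two independent uniformly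
random plane binary trees with `n` leaves. -/
noncomputable def nuP (n : ℕ) (S : Finset (PTree × PTree)) : ℝ :=
  (((planeTrees n) ×ˢ (planeTrees n)).filter
      fun p => (normalize p.1, normalize p.2) ∈ S).card / ((planeTrees n).card ^ 2 : ℝ)

/-- The total variation distance between `nuT` and `nuP`. -/
noncomputable def tvDist (n : ℕ) : ℝ :=
  ((binTrees n ×ˢ binTrees n).powerset).sup' (Finset.powerset_nonempty _)
    fun S => |nuT n S - nuP n S|

/-- The number of occurrences of (trees isomorphic to) `B` as a fringe subtree of `T`. -/
def occ (B : PTree) : PTree → ℕ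
  | leaf => if normalize leaf = normalize B then 1 else 0
  | node l r => (if normalize (node l r) = normalize B then 1 else 0) + occ B l + occ B r

/-- The number of generators of the automorphism group of `T`: the number of internal
vertices whose two branches are isomorphic. -/
def gens : PTree → ℕ
  | leaf => 0
  | node l r => (if normalize l = normalize r then 1 else 0) + gens l + gens r

/-- `T` has a root branch isomorphic to `B`. -/
def hasBranch (B : PTree) : PTree → Prop
  | leaf => False
  | node l r => normalize l = normalize B ∨ normalize r = normalize B

/-- The cherries of a plane binary tree whose leaves are numbered from `k` on
(left to right), as pairs of leaf positions. -/
def cherryList : PTree → ℕ → List (ℕ × ℕ)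
  | leaf, _ => []
  | node leaf leaf, k => [(k, k + 1)]
  | node l r, k => cherryList l k ++ cherryList r (k + l.size)

/-- The number of matched cherries: cherries of `T` whose two leaves are matched by `L`
to the two leaves of a cherry of `S`. -/
def matchedCherries (T S : PTree) (L : List ℕ) : ℕ :=
  (cherryList T 0).countP fun p =>
    (cherryList S 0).any fun q =>
      (L.getD p.1 0 == q.1 && L.getD p.2 0 == q.2) ||
      (L.getD p.1 0 == q.2 && L.getD p.2 0 == q.1)

/-- The number of automorphisms of the tanglegram represented by the triple `(T, L, S)`:
pairs of automorphisms of the two trees compatible with the matching `L`. -/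
def tangleAutCount (T S : PTree) (L : List ℕ) : ℕ :=
  ((isoFuns T T).map fun a =>
    (isoFuns S S).countP fun b =>
      (List.range T.size).all fun i => L.getD (a i) 0 == b (L.getD i 0)).sum

/-- The number of automorphisms of `T` whose cycle type is `μ(s) = 2^s 1^(n-2s)`,
i.e. involutions of the leaves moving exactly `2 s` leaves. -/
def autMuCount (T : PTree) (s : ℕ) : ℕ :=
  (isoFuns T T).countP fun f =>
    ((List.range T.size).all fun i => f (f i) == i) &&
    ((List.range T.size).countP fun i => !(f i == i)) == 2 * s

end PTree

/-! Summing `y ^ (number of moved leaves)` over all automorphisms of a tree with `n` leaves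
gives at most `(1 + y²)^(n-1)`: at the root, the automorphisms fixing both branches contribute
the product of the two branch sums, while the branch-swapping ones, at most `2^(n-2)` of them,
move every leaf, and `2y ≤ 1 + y²`. Taking `y² = s/n` gives `|A(T)_{μ(s)}| ≤ (e n / s)^s`;
together with `C(n, 2s) ≥ (n / 2s)^(2s)` this bounds the `s`-th summand by `(8e²)^s / s!`,
so `K = exp (8e²)` works. -/

lemma List.sum_map_flatMap_map {α β γ M : Type*} [AddCommMonoid M] (L₁ : List α)
    (L₂ : List β) (F : α → β → γ) (φ : γ → M) :
    ((L₁.flatMap fun a => L₂.map (F a)).map φ).sum =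
      (L₁.map fun a => (L₂.map fun b => φ (F a b)).sum).sum := by
  induction L₁ with
  | nil => simp
  | cons a L ih => simp [ih, Function.comp_def]

lemma List.countP_mul_le_sum_map {α : Type*} (p : α → Bool) {φ : α → ℝ} {w : ℝ} :
    ∀ {L : List α}, (∀ a ∈ L, 0 ≤ φ a) → (∀ a ∈ L, p a → w ≤ φ a) →
      (L.countP p : ℝ) * w ≤ (L.map φ).sum
  | [], _, _ => by simp
  | a :: L, hφ, hw => by
      have ih := List.countP_mul_le_sum_map p (L := L) (fun b hb => hφ b (.tail _ hb))
        (fun b hb => hw b (.tail _ hb))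
      rw [List.countP_cons, List.map_cons, List.sum_cons]
      split_ifs with hpa
      · push_cast; linarith [hw a List.mem_cons_self hpa]
      · push_cast; linarith [hφ a List.mem_cons_self]

section

open Nat Finset

lemma Nat.descFactorial_mul_pow_le_descFactorial_mul_pow {m n : ℕ} (h : m ≤ n) (k : ℕ) :
    m.descFactorial k * n ^ k ≤ n.descFactorial k * m ^ k := by
  have hfactor : ∀ i ∈ range k, (m - i) * n ≤ (n - i) * m := fun i _ => by
    have := Nat.mul_le_mul_left i h
    rw [Nat.sub_mul, Nat.sub_mul, Nat.mul_comm n m]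
    omega
  simpa only [descFactorial_eq_prod_range, prod_mul_distrib, prod_const, card_range]
    using prod_le_prod' hfactor

lemma Nat.factorial_mul_factorial_mul_pow_le {k n : ℕ} (h : k ≤ n) :
    k ! * (n - k)! * n ^ k ≤ n ! * k ^ k :=
  calc k ! * (n - k)! * n ^ k = (n - k)! * (k.descFactorial k * n ^ k) := by
        rw [descFactorial_self]; ring
    _ ≤ (n - k)! * (n.descFactorial k * k ^ k) :=
        Nat.mul_le_mul_left _ (descFactorial_mul_pow_le_descFactorial_mul_pow h k)
    _ = n ! * k ^ k := by rw [← mul_assoc, factorial_mul_descFactorial h]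

lemma zmu_mul_mul_le {n s : ℕ} (hs : 2 * s ≤ n) {a b c : ℝ} (ha : 0 ≤ a) (hb : 0 ≤ b)
    (has : a * s ^ s ≤ (c * n) ^ s) (hbs : b * s ^ s ≤ (c * n) ^ s) :
    2 ^ s * (s ! : ℝ) * (n - 2 * s)! * a * b ≤ (8 * c ^ 2) ^ s / s ! * n ! := by
  have hfac : ((2 * s)! : ℝ) * (n - 2 * s)! * n ^ (2 * s) ≤ n ! * (4 ^ s * s ^ (2 * s)) := by
    have h4 : (4 : ℝ) ^ s * s ^ (2 * s) = (2 * s) ^ (2 * s) := by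
      rw [mul_pow, pow_mul (2 : ℝ)]; norm_num
    rw [h4]
    exact_mod_cast factorial_mul_factorial_mul_pow_le hs
  have hab : a * b * s ^ (2 * s) ≤ (c ^ 2) ^ s * n ^ (2 * s) := calc
    a * b * s ^ (2 * s) = (a * s ^ s) * (b * s ^ s) := by ring
    _ ≤ (c * n) ^ s * (c * n) ^ s :=
        mul_le_mul has hbs (by positivity) ((mul_nonneg ha (by positivity)).trans has)
    _ = (c ^ 2) ^ s * n ^ (2 * s) := by ring
  have hss : (s ! : ℝ) * s ! ≤ (2 * s)! := by
    exact_mod_cast le_of_dvd (factorial_pos _)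
      (two_mul s ▸ factorial_mul_factorial_dvd_factorial_add s s)
  have hpos : (0 : ℝ) < s ^ (2 * s) * n ^ (2 * s) := by
    rcases s.eq_zero_or_pos with rfl | hs0
    · simp
    · have : 0 < n := by omega
      positivity
  have h8 : (8 * c ^ 2) ^ s = 2 ^ s * 4 ^ s * (c ^ 2) ^ s := by
    rw [← mul_pow, ← mul_pow]; norm_num
  rw [div_mul_eq_mul_div, le_div_iff₀ (by positivity)]
  refine le_of_mul_le_mul_right ?_ hpos
  calc 2 ^ s * (s ! : ℝ) * (n - 2 * s)! * a * b * s ! * (s ^ (2 * s) * n ^ (2 * s))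
      = 2 ^ s * (s ! * s !) * ((n - 2 * s)! * n ^ (2 * s)) * (a * b * s ^ (2 * s)) := by ring
    _ ≤ 2 ^ s * (2 * s)! * ((n - 2 * s)! * n ^ (2 * s)) * ((c ^ 2) ^ s * n ^ (2 * s)) := by
        gcongr
    _ = 2 ^ s * ((2 * s)! * (n - 2 * s)! * n ^ (2 * s)) * ((c ^ 2) ^ s * n ^ (2 * s)) := by ring
    _ ≤ 2 ^ s * (n ! * (4 ^ s * s ^ (2 * s))) * ((c ^ 2) ^ s * n ^ (2 * s)) := by gcongr
    _ = (8 * c ^ 2) ^ s * n ! * (s ^ (2 * s) * n ^ (2 * s)) := by rw [h8]; ring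

end

namespace PTree

lemma size_pos : ∀ T : PTree, 0 < T.size
  | leaf => Nat.one_pos
  | node l _ => Nat.add_pos_left (size_pos l) _

lemma isoFuns_apply_lt : ∀ {T S : PTree}, ∀ f ∈ isoFuns T S, ∀ i < T.size, f i < S.size
  | leaf, leaf, f, hf, i, hi => by simp_all [isoFuns, size]
  | leaf, node _ _, f, hf, _, _ => by simp [isoFuns] at hf
  | node _ _, leaf, f, hf, _, _ => by simp [isoFuns] at hf
  | node l r, node l' r', f, hf, i, hi => by
      simp only [isoFuns, List.mem_append, List.mem_flatMap, List.mem_map] at hf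
      simp only [size] at hi ⊢
      rcases hf with ⟨g, hg, h, hh, rfl⟩ | ⟨g, hg, h, hh, rfl⟩ <;> dsimp only <;>
        split_ifs with hi'
      · have := isoFuns_apply_lt g hg i hi'; omega
      · have := isoFuns_apply_lt h hh (i - l.size) (by omega); omega
      · have := isoFuns_apply_lt g hg i hi'; omega
      · have := isoFuns_apply_lt h hh (i - l.size) (by omega); omega

lemma length_isoFuns_le : ∀ T S : PTree, (isoFuns T S).length ≤ 2 ^ (T.size - 1)
  | leaf, leaf => by simp [isoFuns, size]
  | leaf, node _ _ => by simp [isoFuns]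
  | node _ _, leaf => by simp [isoFuns]
  | node l r, node l' r' => by
      have hl := size_pos l
      have hr := size_pos r
      have hsize : l.size + r.size - 1 = l.size - 1 + (r.size - 1) + 1 := by omega
      simp only [isoFuns, List.length_append, List.length_flatMap, List.length_map,
        List.map_const', List.sum_replicate, smul_eq_mul, size, hsize]
      calc (isoFuns l l').length * (isoFuns r r').length +
            (isoFuns l r').length * (isoFuns r l').length
          ≤ 2 ^ (l.size - 1) * 2 ^ (r.size - 1) + 2 ^ (l.size - 1) * 2 ^ (r.size - 1) := by
            gcongr <;> apply length_isoFuns_le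
        _ = 2 ^ (l.size - 1 + (r.size - 1) + 1) := by ring

def movedCount (n : ℕ) (f : ℕ → ℕ) : ℕ := (List.range n).countP fun i => !(f i == i)

lemma movedCount_add (p q : ℕ) (g h : ℕ → ℕ) :
    movedCount (p + q) (fun i => if i < p then g i else h (i - p) + p) =
      movedCount p g + movedCount q h := by
  simp only [movedCount, List.range_add, List.countP_append, List.countP_map]
  congr 1 <;> refine List.countP_congr fun i hi => ?_
  · simp [List.mem_range.mp hi]
  · simp [add_comm p i]

lemma movedCount_swap {p q : ℕ} (g : ℕ → ℕ) {h : ℕ → ℕ} (hh : ∀ i < q, h i < p) :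
    movedCount (p + q) (fun i => if i < p then g i + p else h (i - p)) = p + q := by
  rw [movedCount, List.countP_eq_length.mpr, List.length_range]
  intro i hi
  have hi : i < p + q := List.mem_range.mp hi
  have hmoved : (if i < p then g i + p else h (i - p)) ≠ i := by
    split_ifs with hip
    · omega
    · have := hh (i - p) (by omega); omega
  simpa using hmoved

noncomputable def autMovedSum (T : PTree) (y : ℝ) : ℝ :=
  ((isoFuns T T).map fun f => y ^ movedCount T.size f).sum

lemma autMovedSum_node_le (l r : PTree) {y : ℝ} (hy : 0 ≤ y) :
    autMovedSum (node l r) y ≤ autMovedSum l y * autMovedSum r y +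
      2 ^ (l.size - 1) * 2 ^ (r.size - 1) * y ^ (l.size + r.size) := by
  simp only [autMovedSum, isoFuns, size, List.map_append, List.sum_append, List.sum_map_flatMap_map]
  gcongr
  · simp only [movedCount_add, pow_add, List.sum_map_mul_left, List.sum_map_mul_right]
    rfl
  · calc _ = ((isoFuns l r).map fun _ =>
            ((isoFuns r l).map fun _ => y ^ (l.size + r.size)).sum).sum := by
          refine congrArg List.sum (List.map_congr_left fun g _ =>
            congrArg List.sum (List.map_congr_left fun h hh => ?_))
          rw [movedCount_swap g (isoFuns_apply_lt h hh)]
      _ = (isoFuns l r).length * (isoFuns r l).length * y ^ (l.size + r.size) := by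
          simp [mul_assoc]
      _ ≤ _ := by gcongr <;> exact_mod_cast length_isoFuns_le _ _

lemma autMovedSum_nonneg (T : PTree) {y : ℝ} (hy : 0 ≤ y) : 0 ≤ autMovedSum T y :=
  List.sum_nonneg fun _ hx => by
    obtain ⟨f, -, rfl⟩ := List.mem_map.mp hx
    positivity

lemma one_add_sq_pow_mul_add_le {y : ℝ} (hy : 0 ≤ y) (a b : ℕ) :
    (1 + y ^ 2) ^ a * (1 + y ^ 2) ^ b + 2 ^ a * 2 ^ b * y ^ (a + 1 + (b + 1)) ≤
      (1 + y ^ 2) ^ (a + b + 1) := by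
  have h2y : (2 * y) ^ (a + b) ≤ (1 + y ^ 2) ^ (a + b) :=
    pow_le_pow_left₀ (by positivity) (by nlinarith [sq_nonneg (1 - y)]) _
  calc (1 + y ^ 2) ^ a * (1 + y ^ 2) ^ b + 2 ^ a * 2 ^ b * y ^ (a + 1 + (b + 1))
      = (1 + y ^ 2) ^ (a + b) + (2 * y) ^ (a + b) * y ^ 2 := by ring
    _ ≤ (1 + y ^ 2) ^ (a + b) + (1 + y ^ 2) ^ (a + b) * y ^ 2 := by gcongr
    _ = (1 + y ^ 2) ^ (a + b + 1) := by ring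

lemma autMovedSum_le {y : ℝ} (hy : 0 ≤ y) :
    ∀ T : PTree, autMovedSum T y ≤ (1 + y ^ 2) ^ (T.size - 1)
  | leaf => by simp [autMovedSum, isoFuns, movedCount, size]
  | node l r => by
      obtain ⟨a, ha⟩ := Nat.exists_eq_add_one.mpr (size_pos l)
      obtain ⟨b, hb⟩ := Nat.exists_eq_add_one.mpr (size_pos r)
      have hsize : (node l r).size - 1 = a + b + 1 := by simp only [size]; omega
      calc autMovedSum (node l r) y
          ≤ autMovedSum l y * autMovedSum r y + 2 ^ a * 2 ^ b * y ^ (a + 1 + (b + 1)) := by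
            simpa [ha, hb] using autMovedSum_node_le l r hy
        _ ≤ (1 + y ^ 2) ^ a * (1 + y ^ 2) ^ b + 2 ^ a * 2 ^ b * y ^ (a + 1 + (b + 1)) := by
            have hl := autMovedSum_le hy l
            have hr := autMovedSum_le hy r
            rw [ha, Nat.add_sub_cancel] at hl
            rw [hb, Nat.add_sub_cancel] at hr
            gcongr
            exact autMovedSum_nonneg r hy
        _ ≤ (1 + y ^ 2) ^ ((node l r).size - 1) := by
            rw [hsize]; exact one_add_sq_pow_mul_add_le hy a b

lemma autMuCount_mul_pow_le (T : PTree) (s : ℕ) {y : ℝ} (hy : 0 ≤ y) :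
    (autMuCount T s : ℝ) * y ^ (2 * s) ≤ (1 + y ^ 2) ^ (T.size - 1) := by
  refine le_trans ?_ (autMovedSum_le hy T)
  refine List.countP_mul_le_sum_map _ (fun _ _ => by positivity) fun f _ hf => le_of_eq ?_
  simp only [Bool.and_eq_true, beq_iff_eq] at hf
  rw [movedCount, hf.2]

lemma autMuCount_mul_pow_self_le (T : PTree) (s : ℕ) :
    (autMuCount T s : ℝ) * s ^ s ≤ (Real.exp 1 * T.size) ^ s := by
  have hn : (0 : ℝ) < T.size := by exact_mod_cast size_pos T
  set x : ℝ := s / T.size with hx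
  have hx0 : 0 ≤ x := by positivity
  have hbound : (autMuCount T s : ℝ) * x ^ s ≤ Real.exp s := calc
    _ = (autMuCount T s : ℝ) * √x ^ (2 * s) := by rw [pow_mul, Real.sq_sqrt hx0]
    _ ≤ (1 + √x ^ 2) ^ (T.size - 1) := autMuCount_mul_pow_le T s (Real.sqrt_nonneg x)
    _ = (1 + x) ^ (T.size - 1) := by rw [Real.sq_sqrt hx0]
    _ ≤ (1 + x) ^ T.size := pow_le_pow_right₀ (by linarith) (Nat.sub_le _ _)
    _ ≤ Real.exp x ^ T.size := by gcongr; linarith [Real.add_one_le_exp x]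
    _ = Real.exp s := by rw [← Real.exp_nat_mul, hx, mul_div_cancel₀ _ hn.ne']
  calc (autMuCount T s : ℝ) * s ^ s = (autMuCount T s : ℝ) * x ^ s * T.size ^ s := by
        rw [hx, div_pow]; field_simp
    _ ≤ Real.exp s * T.size ^ s := by gcongr
    _ = (Real.exp 1 * T.size) ^ s := by rw [mul_pow, ← Real.exp_nat_mul, mul_one]

end PTree

open PTree in
/-- Lemma 3, part (1): there is an absolute constant `K` bounding
`(1/n!) ∑_s z_{μ(s)} |A(B₁)_{μ(s)}| |A(B₂)_{μ(s)}|` for all pairs of binary trees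
with `n` leaves, where `z_{μ(s)} = 2^s s! (n-2s)!`. -/
theorem sum_zmu_autMuCount_le :
    ∃ K : ℝ, ∀ n : ℕ, ∀ B₁ B₂ : PTree, B₁.size = n → B₂.size = n →
      (∑ s ∈ Finset.range (n / 2 + 1),
          (2 : ℝ) ^ s * (Nat.factorial s) * (Nat.factorial (n - 2 * s)) *
            (autMuCount B₁ s) * (autMuCount B₂ s)) / (Nat.factorial n : ℝ) ≤ K := by
  set c := 8 * Real.exp 1 ^ 2
  refine ⟨Real.exp c, fun n B₁ B₂ h₁ h₂ => ?_⟩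
  rw [div_le_iff₀ (by positivity)]
  calc _ ≤ ∑ s ∈ Finset.range (n / 2 + 1), c ^ s / s.factorial * n.factorial :=
        Finset.sum_le_sum fun s hs => zmu_mul_mul_le (by grind) (by positivity) (by positivity)
          (h₁ ▸ autMuCount_mul_pow_self_le B₁ s) (h₂ ▸ autMuCount_mul_pow_self_le B₂ s)
    _ = (∑ s ∈ Finset.range (n / 2 + 1), c ^ s / s.factorial) * n.factorial :=
        (Finset.sum_mul ..).symm
    _ ≤ Real.exp c * n.factorial := by
        gcongr; exact Real.sum_le_exp_of_nonneg (by positivity) _
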